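/- arXiv:2405.14569 — 3 statements merged into one kernel-verified Lean document; each statement's English description precedes it below -/
import Mathlib

section
/- Let b, d1 ≥ 1 be natural numbers and set n = b·d1. Let W ∈ ℤ^{b×b} be a circulant matrix with first column w ∈ ℤ^b (so W[i,j] = w[(i−j) mod b] for all i,j ∈ {0,…,b−1}), and let X ∈ ℤ^{b×d1}. Define ŵ ∈ ℤ^n by ŵ[i·d1] = w[i] for i ∈ {0,…,b−1} and ŵ[t] = 0 for all other indices t, and define x̂ ∈ ℤ^n by x̂[i·d1 + j] = X[i,j] for i ∈ {0,…,b−1}, j ∈ {0,…,d1−1}. Then the cyclic convolution ŷ = ŵ ⋆ x̂ ∈ ℤ^n satisfies ŷ[i·d1 + j] = (W·X)[i,j] for all i ∈ {0,…,b−1}, j ∈ {0,…,d1−1}. -/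
/-! Split the summation index of `ŷ[i * d1 + j]` by blocks, `s = k * d1 + l`. The shift
`i * d1 + j + n - s` is `≡ j - l (mod d1)`, so `ŵ` vanishes there unless `l = j`; for `l = j`
the shift is `(i + b - k) * d1`, whose residue mod `n` is `((i + b - k) % b) * d1`, where `ŵ`
reads `w ((i - k) mod b) = W[i,k]`. -/

open Finset

theorem Finset.sum_range_mul_eq_sum_sum {M : Type*} [AddCommMonoid M] (b d : ℕ) (f : ℕ → M) :
    ∑ s ∈ range (b * d), f s = ∑ k ∈ range b, ∑ l ∈ range d, f (k * d + l) := by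
  induction b with
  | zero => simp
  | succ b ih => rw [sum_range_succ, ← ih, Nat.succ_mul, sum_range_add]

namespace Nat

theorem dvd_mul_add_add_mul_sub_mul_add_iff {b d i j k l : ℕ} (hk : k < b) (hj : j < d)
    (hl : l < d) : d ∣ i * d + j + b * d - (k * d + l) ↔ j = l := by
  have hkl : k * d + l < b * d := mul_comm d k ▸ mul_add_lt_mul_of_lt_of_lt hk hl
  have hcast : ((i * d + j + b * d - (k * d + l) : ℕ) : ℤ) =
      (j - l : ℤ) + d * (i + b - k) := by
    push_cast [Nat.cast_sub (by omega : k * d + l ≤ i * d + j + b * d)]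
    ring
  rw [← Int.natCast_dvd_natCast, hcast, dvd_add_left (dvd_mul_right _ _)]
  refine ⟨fun h => ?_, fun h => by simp [h]⟩
  have := Int.eq_zero_of_abs_lt_dvd h (abs_sub_lt_iff.2 ⟨by omega, by omega⟩)
  omega

theorem mul_add_add_mul_sub_mul_add_mod {b d i j k : ℕ} :
    (i * d + j + b * d - (k * d + j)) % (b * d) = (i + b - k) % b * d := by
  have hshift : i * d + j + b * d - (k * d + j) = (i + b - k) * d := by
    rw [Nat.sub_mul, add_mul]
    omega
  rw [hshift, Nat.mul_mod_mul_right]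

end Nat

theorem cirencode_gemm_general
    (b d1 : ℕ) (n : ℕ) (hn : n = b * d1)
    (w : ℕ → ℤ) (W : ℕ → ℕ → ℤ)
    (hW : ∀ i < b, ∀ j < b, W i j = w ((i + b - j) % b))
    (X : ℕ → ℕ → ℤ)
    (what xhat yhat : ℕ → ℤ)
    (hwhat : ∀ i < b, what (i * d1) = w i)
    (hwhat0 : ∀ t < n, ¬ d1 ∣ t → what t = 0)
    (hxhat : ∀ i < b, ∀ j < d1, xhat (i * d1 + j) = X i j)
    (hyhat : ∀ t < n, yhat t = ∑ s ∈ Finset.range n, what ((t + n - s) % n) * xhat s) :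
    ∀ i < b, ∀ j < d1,
      yhat (i * d1 + j) = ∑ k ∈ Finset.range b, W i k * X k j := by
  subst hn
  intro i hi j hj
  have hpos : 0 < b * d1 := Nat.mul_pos (by omega) (by omega)
  rw [hyhat _ (mul_comm d1 i ▸ Nat.mul_add_lt_mul_of_lt_of_lt hi hj), sum_range_mul_eq_sum_sum]
  refine sum_congr rfl fun k hk => ?_
  rw [mem_range] at hk
  rw [sum_eq_single_of_mem j (mem_range.2 hj), Nat.mul_add_add_mul_sub_mul_add_mod,
    hwhat _ (Nat.mod_lt _ (by omega)), hxhat k hk j hj, hW i hi k hk]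
  intro l hl hlj
  have hndvd : ¬ d1 ∣ (i * d1 + j + b * d1 - (k * d1 + l)) % (b * d1) := by
    rw [Nat.dvd_mod_iff (dvd_mul_left d1 b),
      Nat.dvd_mul_add_add_mul_sub_mul_add_iff hk hj (mem_range.1 hl)]
    exact Ne.symm hlj
  rw [hwhat0 _ (Nat.mod_lt _ hpos) hndvd, zero_mul]

/-- **CirEncode within a circulant block** (Theorem 1 of the paper).
Let `n = b * d1`. If `W` is a `b × b` circulant integer matrix with first column `w`
(`W[i,j] = w[(i-j) mod b]`), `X` is a `b × d1` integer matrix, `ŵ` encodes `w` at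
indices `i * d1` (zero elsewhere on `{0,…,n-1}`), and `x̂` encodes `X` row-major,
then the length-`n` cyclic convolution `ŷ = ŵ ⋆ x̂` satisfies
`ŷ[i*d1 + j] = (W·X)[i,j]`. -/
theorem cirencode_gemm
    (b d1 : ℕ) (hb : 1 ≤ b) (hd1 : 1 ≤ d1) (n : ℕ) (hn : n = b * d1)
    (w : ℕ → ℤ) (W : ℕ → ℕ → ℤ)
    (hW : ∀ i < b, ∀ j < b, W i j = w ((i + b - j) % b))
    (X : ℕ → ℕ → ℤ)
    (what xhat yhat : ℕ → ℤ)
    (hwhat : ∀ i < b, what (i * d1) = w i)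
    (hwhat0 : ∀ t < n, ¬ d1 ∣ t → what t = 0)
    (hxhat : ∀ i < b, ∀ j < d1, xhat (i * d1 + j) = X i j)
    (hyhat : ∀ t < n, yhat t = ∑ s ∈ Finset.range n, what ((t + n - s) % n) * xhat s) :
    ∀ i < b, ∀ j < d1,
      yhat (i * d1 + j) = ∑ k ∈ Finset.range b, W i k * X k j :=
  cirencode_gemm_general b d1 n hn w W hW X what xhat yhat hwhat hwhat0 hxhat hyhat
end

section
/- Let b, H, V, R ≥ 1 with R ≤ H and R ≤ V, and set n = b·H·V. Let K ∈ ℤ^{b×b×R×R} be a convolution kernel that is circulant in its two channel dimensions, i.e., K[i,l,m,h] = K[(i−l) mod b, 0, m, h] for all i,l ∈ {0,…,b−1} and m,h ∈ {0,…,R−1}, and let X ∈ ℤ^{b×H×V} be an input tensor. Define x̂ ∈ ℤ^n by x̂[i·H·V + j·V + k] = X[i,j,k] for i ∈ {0,…,b−1}, j ∈ {0,…,H−1}, k ∈ {0,…,V−1}, and define ŵ ∈ ℤ^n by ŵ[i·H·V + (V+1)(R−1) − m·V − h] = K[i,0,m,h] for i ∈ {0,…,b−1}, m,h ∈ {0,…,R−1},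 with all other entries 0. Then the length-n cyclic convolution ŷ = ŵ ⋆ x̂ satisfies, for all i ∈ {0,…,b−1}, j ∈ {0,…,H−R}, k ∈ {0,…,V−R}: ŷ[i·H·V + (V+1)(R−1) + j·V + k] = Y[i,j,k], where Y ∈ ℤ^{b×(H−R+1)×(V−R+1)} is the valid 2-D convolution output Y[i,j,k] = Σ_{l=0}^{b−1} Σ_{m=0}^{R−1} Σ_{h=0}^{R−1} K[i,l,m,h]·X[l, j+m, k+h]. -/
/-!
Write indices of `ℤ^{bHV}` in mixed radix `(a, p, q)` with `a < b`, `p < H`, `q < V`. Since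
`t ↦ (T - t) mod n` permutes the indices, `ŷ[T] = Σ_u ŵ[u] · x̂[T - u]`, and `ŵ` is supported on
the `b × R × R` digits `(a, R-1-m, R-1-h)`. For the output index `T = (i, j+R-1, k+R-1)` the
difference `T - (a, R-1-m, R-1-h)` is `(i - a mod b, j+m, k+h)` without borrows, so
`ŷ[T] = Σ_{a,m,h} K[a,0,m,h] · X[i-a mod b, j+m, k+h]`; substituting `l = i - a mod b` and
using circulance `K[i,l,m,h] = K[i-l mod b,0,m,h]` gives the convolution.
-/

open Finset

namespace CirEncode

theorem sum_range_mul {M : Type*} [AddCommMonoid M] (a c : ℕ) (f : ℕ → M) :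
    ∑ s ∈ range (a * c), f s = ∑ p ∈ range a, ∑ q ∈ range c, f (p * c + q) := by
  induction a with
  | zero => simp
  | succ a ih => rw [sum_range_succ, ← ih, Nat.succ_mul, sum_range_add]

theorem sum_range_mul_mul {M : Type*} [AddCommMonoid M] (b H V : ℕ) (f : ℕ → M) :
    ∑ s ∈ range (b * H * V), f s =
      ∑ a ∈ range b, ∑ p ∈ range H, ∑ q ∈ range V, f (a * H * V + p * V + q) := by
  simp only [sum_range_mul, add_mul]

theorem mul_add_inj {c p q p' q' : ℕ} (hq : q < c) (hq' : q' < c)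
    (h : p * c + q = p' * c + q') : p = p' ∧ q = q' := by
  have hqq : q = q' := by
    rw [← Nat.mul_add_mod_of_lt (a := p) hq, ← Nat.mul_add_mod_of_lt (a := p') hq', h]
  subst hqq
  exact ⟨Nat.eq_of_mul_eq_mul_right (by omega) (Nat.add_right_cancel h), rfl⟩

theorem mul_add_lt_mul {H V p q : ℕ} (hp : p < H) (hq : q < V) : p * V + q < H * V :=
  calc p * V + q < (p + 1) * V := by rw [add_one_mul]; omega
    _ ≤ H * V := Nat.mul_le_mul_right _ hp

theorem mul_add_mod_mul {a c d r : ℕ} (hr : r < c) :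
    (a * c + r) % (d * c) = a % d * c + r := by
  rw [mul_comm d, Nat.mod_mul, Nat.mul_add_mod_of_lt hr, add_comm (a * c),
    Nat.add_mul_div_right _ _ (by omega), Nat.div_eq_of_lt hr, zero_add, add_comm, mul_comm c]

theorem sub_mod_involutive {n t s : ℕ} (ht : t < n) (hs : s < n) :
    (t + n - (t + n - s) % n) % n = s := by
  rcases le_or_gt s t with hst | hst
  · rw [show t + n - s = t - s + n by omega, Nat.add_mod_right,
      Nat.mod_eq_of_lt (a := t - s) (by omega), show t + n - (t - s) = s + n by omega,
      Nat.add_mod_right, Nat.mod_eq_of_lt hs]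
  · rw [Nat.mod_eq_of_lt (a := t + n - s) (by omega), show t + n - (t + n - s) = s by omega,
      Nat.mod_eq_of_lt hs]

theorem sum_range_sub_mod_comm {M : Type*} [AddCommMonoid M] {n t : ℕ} (ht : t < n)
    (F : ℕ → ℕ → M) :
    ∑ s ∈ range n, F ((t + n - s) % n) s = ∑ s ∈ range n, F s ((t + n - s) % n) := by
  have hn : 0 < n := by omega
  refine sum_nbij' (fun s => (t + n - s) % n) (fun s => (t + n - s) % n)
    (fun s _ => mem_range.2 (Nat.mod_lt _ hn)) (fun s _ => mem_range.2 (Nat.mod_lt _ hn))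
    (fun s hs => sub_mod_involutive ht (mem_range.1 hs))
    (fun s hs => sub_mod_involutive ht (mem_range.1 hs)) fun s hs => ?_
  rw [sub_mod_involutive ht (mem_range.1 hs)]

theorem sum_range_sum_range_eq_of_eq_zero {M : Type*} [AddCommMonoid M] {H V R : ℕ}
    (hRH : R ≤ H) (hRV : R ≤ V) (f : ℕ → ℕ → M)
    (hf : ∀ p < H, ∀ q < V, R ≤ p ∨ R ≤ q → f p q = 0) :
    ∑ p ∈ range H, ∑ q ∈ range V, f p q = ∑ p ∈ range R, ∑ q ∈ range R, f p q := by
  rw [← sum_subset (range_subset_range.2 hRH) fun p hp hpR => sum_eq_zero fun q hq =>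
    hf p (mem_range.1 hp) q (mem_range.1 hq) (.inl (by simpa using hpR))]
  exact sum_congr rfl fun p hp => (sum_subset (range_subset_range.2 hRV) fun q hq hqR =>
    hf p ((mem_range.1 hp).trans_le hRH) q (mem_range.1 hq) (.inr (by simpa using hqR))).symm

section Encoding

variable {b H V R : ℕ}

theorem digits_lt {a p q : ℕ} (ha : a < b) (hp : p < H) (hq : q < V) :
    a * H * V + p * V + q < b * H * V := by
  have := mul_add_lt_mul hp hq
  calc a * H * V + p * V + q < (a + 1) * (H * V) := by rw [add_one_mul, mul_assoc a]; omega
    _ ≤ b * H * V := by rw [mul_assoc b]; exact Nat.mul_le_mul_right _ ha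

theorem outputIndex_lt {i j k : ℕ} (hi : i < b) (hR : 1 ≤ R) (hj : j + R ≤ H) (hk : k + R ≤ V) :
    i * H * V + (V + 1) * (R - 1) + j * V + k < b * H * V := by
  convert digits_lt hi (show j + (R - 1) < H by omega) (show k + (R - 1) < V by omega) using 1
  zify [hR]
  ring

theorem digits_inj {a p q a' p' q' : ℕ} (hp : p < H) (hq : q < V) (hp' : p' < H)
    (hq' : q' < V) (h : a * H * V + p * V + q = a' * H * V + p' * V + q') :
    a = a' ∧ p = p' ∧ q = q' := by
  simp only [← add_mul] at h
  obtain ⟨hap, rfl⟩ := mul_add_inj hq hq' h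
  obtain ⟨rfl, rfl⟩ := mul_add_inj hp hp' hap
  exact ⟨rfl, rfl, rfl⟩

theorem weightIndex_eq {i m h : ℕ} (hm : m < R) (hh : h < R) :
    i * H * V + (V + 1) * (R - 1) - m * V - h = i * H * V + (R - 1 - m) * V + (R - 1 - h) := by
  rw [Nat.sub_sub, Nat.sub_eq_of_eq_add]
  zify [show m ≤ R - 1 by omega, show h ≤ R - 1 by omega, show 1 ≤ R by omega]
  ring

-- No borrow occurs in the two spatial digits, because `j + m < H` and `k + h < V`.
theorem outputIndex_sub_weightIndex {i j k a m h : ℕ} (ha : a < b) (hm : m < R) (hh : h < R)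
    (hj : j + R ≤ H) (hk : k + R ≤ V) :
    (i * H * V + (V + 1) * (R - 1) + j * V + k + b * H * V
        - (a * H * V + (R - 1 - m) * V + (R - 1 - h))) % (b * H * V)
      = (i + b - a) % b * H * V + (j + m) * V + (k + h) := by
  have hsub : i * H * V + (V + 1) * (R - 1) + j * V + k + b * H * V
      - (a * H * V + (R - 1 - m) * V + (R - 1 - h))
      = (i + b - a) * (H * V) + ((j + m) * V + (k + h)) := by
    refine Nat.sub_eq_of_eq_add ?_
    zify [show m ≤ R - 1 by omega, show h ≤ R - 1 by omega, show 1 ≤ R by omega,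
      show a ≤ i + b by omega]
    ring
  rw [hsub, mul_assoc b, mul_add_mod_mul (mul_add_lt_mul (by omega) (by omega))]
  ring

theorem weight_eq_zero {M : Type*} [Zero M] {w : ℕ → M} (hRH : R ≤ H) (hRV : R ≤ V)
    (hw : ∀ t < b * H * V, (¬ ∃ i m h, i < b ∧ m < R ∧ h < R ∧
      t = i * H * V + (V + 1) * (R - 1) - m * V - h) → w t = 0)
    {a p q : ℕ} (ha : a < b) (hp : p < H) (hq : q < V) (hpq : R ≤ p ∨ R ≤ q) :
    w (a * H * V + p * V + q) = 0 := by
  refine hw _ (digits_lt ha hp hq) ?_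
  rintro ⟨i, m, h, -, hm, hh, heq⟩
  rw [weightIndex_eq hm hh] at heq
  obtain ⟨-, rfl, rfl⟩ := digits_inj hp hq (by omega) (by omega) heq
  omega

end Encoding

end CirEncode

open CirEncode

theorem cirencode_conv_general
    (b H V R : ℕ) (hR : 1 ≤ R) (hRH : R ≤ H) (hRV : R ≤ V)
    (n : ℕ) (hn : n = b * H * V)
    (K : ℕ → ℕ → ℕ → ℕ → ℤ)
    (hK : ∀ i < b, ∀ l < b, ∀ m < R, ∀ h < R, K i l m h = K ((i + b - l) % b) 0 m h)
    (X : ℕ → ℕ → ℕ → ℤ)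
    (what xhat yhat : ℕ → ℤ)
    (hxhat : ∀ i < b, ∀ j < H, ∀ k < V, xhat (i * H * V + j * V + k) = X i j k)
    (hwhat : ∀ i < b, ∀ m < R, ∀ h < R,
      what (i * H * V + (V + 1) * (R - 1) - m * V - h) = K i 0 m h)
    (hwhat0 : ∀ t < n,
      (¬ ∃ i m h, i < b ∧ m < R ∧ h < R ∧
        t = i * H * V + (V + 1) * (R - 1) - m * V - h) → what t = 0)
    (hyhat : ∀ t < n, yhat t = ∑ s ∈ Finset.range n, what ((t + n - s) % n) * xhat s) :
    ∀ i < b, ∀ j < H - R + 1, ∀ k < V - R + 1,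
      yhat (i * H * V + (V + 1) * (R - 1) + j * V + k) =
        ∑ l ∈ Finset.range b, ∑ m ∈ Finset.range R, ∑ h ∈ Finset.range R,
          K i l m h * X l (j + m) (k + h) := by
  intro i hi j hj k hk
  subst hn
  have hT := outputIndex_lt (H := H) (V := V) (j := j) (k := k) hi hR (by omega) (by omega)
  have hwindow : ∀ a < b, ∑ p ∈ range H, ∑ q ∈ range V, what (a * H * V + p * V + q) *
      xhat ((i * H * V + (V + 1) * (R - 1) + j * V + k + b * H * V - (a * H * V + p * V + q))
        % (b * H * V)) =
      ∑ m ∈ range R, ∑ h ∈ range R, K a 0 m h * X ((i + b - a) % b) (j + m) (k + h) := by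
    intro a ha
    rw [sum_range_sum_range_eq_of_eq_zero hRH hRV _ fun p hp q hq hpq => by
      rw [weight_eq_zero hRH hRV hwhat0 ha hp hq hpq, zero_mul], ← sum_range_reflect]
    refine sum_congr rfl fun m hm => ?_
    rw [← sum_range_reflect]
    refine sum_congr rfl fun h hh => ?_
    rw [mem_range] at hm hh
    rw [outputIndex_sub_weightIndex ha hm hh (by omega) (by omega),
      hxhat _ (Nat.mod_lt _ (by omega)) _ (by omega) _ (by omega), ← weightIndex_eq hm hh,
      hwhat a ha m hm h hh]
  calc _ = ∑ u ∈ range (b * H * V), what u *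
        xhat ((i * H * V + (V + 1) * (R - 1) + j * V + k + b * H * V - u) % (b * H * V)) := by
        rw [hyhat _ hT]; exact sum_range_sub_mod_comm hT fun u s => what u * xhat s
    _ = ∑ a ∈ range b, ∑ m ∈ range R, ∑ h ∈ range R,
        K a 0 m h * X ((i + b - a) % b) (j + m) (k + h) := by
        rw [sum_range_mul_mul]; exact sum_congr rfl fun a ha => hwindow a (mem_range.1 ha)
    _ = ∑ l ∈ range b, ∑ m ∈ range R, ∑ h ∈ range R,
        K ((i + b - l) % b) 0 m h * X l (j + m) (k + h) :=
        (sum_range_sub_mod_comm hi fun a l => ∑ m ∈ range R, ∑ h ∈ range R,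
          K a 0 m h * X l (j + m) (k + h)).symm
    _ = _ := sum_congr rfl fun l hl => sum_congr rfl fun m hm => sum_congr rfl fun h hh => by
        rw [hK i hi l (mem_range.1 hl) m (mem_range.1 hm) h (mem_range.1 hh)]

/-- **CirEncode for a block circulant convolution** (Theorem 3 of the paper,
one circulant block, stride 1). Indices: `b` channels, spatial size `H × V`,
kernel size `R ≤ H, V`, `n = b·H·V`. The kernel `K` is circulant in its two channel
dimensions: `K[i,l,m,h] = K[(i-l) mod b, 0, m, h]`. With the stated coefficient
encodings `x̂` and `ŵ`, the length-`n` cyclic convolution `ŷ = ŵ ⋆ x̂` satisfies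
`ŷ[i·H·V + (V+1)(R-1) + j·V + k] = Y[i,j,k]` where `Y` is the valid 2-D
convolution output. -/
theorem cirencode_conv
    (b H V R : ℕ) (hb : 1 ≤ b) (hR : 1 ≤ R) (hRH : R ≤ H) (hRV : R ≤ V)
    (n : ℕ) (hn : n = b * H * V)
    (K : ℕ → ℕ → ℕ → ℕ → ℤ)
    (hK : ∀ i < b, ∀ l < b, ∀ m < R, ∀ h < R, K i l m h = K ((i + b - l) % b) 0 m h)
    (X : ℕ → ℕ → ℕ → ℤ)
    (what xhat yhat : ℕ → ℤ)
    (hxhat : ∀ i < b, ∀ j < H, ∀ k < V, xhat (i * H * V + j * V + k) = X i j k)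
    (hwhat : ∀ i < b, ∀ m < R, ∀ h < R,
      what (i * H * V + (V + 1) * (R - 1) - m * V - h) = K i 0 m h)
    (hwhat0 : ∀ t < n,
      (¬ ∃ i m h, i < b ∧ m < R ∧ h < R ∧
        t = i * H * V + (V + 1) * (R - 1) - m * V - h) → what t = 0)
    (hyhat : ∀ t < n, yhat t = ∑ s ∈ Finset.range n, what ((t + n - s) % n) * xhat s) :
    ∀ i < b, ∀ j < H - R + 1, ∀ k < V - R + 1,
      yhat (i * H * V + (V + 1) * (R - 1) + j * V + k) =
        ∑ l ∈ Finset.range b, ∑ m ∈ Finset.range R, ∑ h ∈ Finset.range R,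
          K i l m h * X l (j + m) (k + h) :=
  cirencode_conv_general b H V R hR hRH hRV n hn K hK X what xhat yhat hxhat hwhat hwhat0 hyhat
end

section
/- Let n, B, G ≥ 1 with n = B·G, let W ∈ R^{n×n} be a matrix over a commutative ring R, and let x ∈ R^n. For d ∈ {0,…,n−1}, write d = j·B + i with j ∈ {0,…,G−1} and i ∈ {0,…,B−1}, and define the pre-rotated diagonal ŵ_d ∈ R^n by ŵ_d[k] = W[(k − j·B) mod n, ((k − j·B) mod n + d) mod n] (i.e., ŵ_d = rot_{−jB}(diag_d(W))). Then W x = Σ_{j=0}^{G−1} rot_{jB}( Σ_{i=0}^{B−1} ŵ_{jB+i} ⊙ rot_i(x) ), where rot_d(v)[k] = v[(k+d) mod n] and ⊙ is entrywise multiplication of vectors. -/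
/-!
Expanding `W x` along generalized diagonals gives `(W x)[k] = Σ_{d<n} W[k, k+d] · x[k+d]`, since
`c ↦ (k + c) mod n` permutes `{0, …, n-1}`. Splitting `d = jB + i` turns this into the double
sum, and the pre-rotation of `ŵ_{jB+i}` by `-jB` exactly undoes the giant-step rotation by `jB`,
so the `(j, i)` summand of the right-hand side is `W[k, k+jB+i] · x[k+jB+i]`.
-/

open Finset

theorem Finset.sum_range_add_mod {M : Type*} [AddCommMonoid M] (f : ℕ → M) (k n : ℕ) :
    ∑ d ∈ range n, f ((k + d) % n) = ∑ d ∈ range n, f d := by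
  rcases n with _ | n
  · simp
  simp only [← Fin.sum_univ_eq_sum_range]
  exact Fintype.sum_equiv (Equiv.addLeft (Fin.ofNat (n + 1) k)) _ _
    fun d => by simp [Fin.val_add]

theorem Finset.sum_range_sum_range_mul_add {M : Type*} [AddCommMonoid M] (f : ℕ → M) (B G : ℕ) :
    ∑ j ∈ range G, ∑ i ∈ range B, f (j * B + i) = ∑ d ∈ range (G * B), f d := by
  induction G with
  | zero => simp
  | succ G ih => rw [sum_range_succ, ih, Nat.succ_mul, sum_range_add]

theorem Nat.add_mod_add_sub_mod_of_le {k m n : ℕ} (hm : m ≤ n) (hk : k < n) :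
    ((k + m) % n + n - m) % n = k := by
  have hmod : (k + m) % n + n - m ≡ k [MOD n] := by
    refine Nat.ModEq.add_right_cancel' m ?_
    rw [Nat.sub_add_cancel (by omega)]
    exact Nat.add_modEq_right.trans (Nat.mod_modEq _ n)
  rw [hmod, Nat.mod_eq_of_lt hk]

theorem bsgs_correctness_general
    {R : Type*} [CommRing R]
    (n B G : ℕ) (hn : n = B * G)
    (W : ℕ → ℕ → R) (x : ℕ → R)
    (what : ℕ → ℕ → R)
    (hwhat : ∀ d < n, ∀ k < n,
      what d k = W ((k + n - (d / B) * B) % n) (((k + n - (d / B) * B) % n + d) % n)) :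
    ∀ k < n,
      (∑ c ∈ Finset.range n, W k c * x c) =
        ∑ j ∈ Finset.range G, ∑ i ∈ Finset.range B,
          what (j * B + i) ((k + j * B) % n) * x (((k + j * B) % n + i) % n) := by
  intro k hk
  have hB : 0 < B := Nat.pos_of_mul_pos_right (hn ▸ Nat.zero_lt_of_lt hk)
  have summand : ∀ j < G, ∀ i < B,
      what (j * B + i) ((k + j * B) % n) * x (((k + j * B) % n + i) % n)
        = W k ((k + (j * B + i)) % n) * x ((k + (j * B + i)) % n) := by
    intro j hj i hi
    have hd : j * B + i < n := by
      rw [hn, Nat.mul_comm j, Nat.mul_comm B G]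
      exact Nat.mul_add_lt_mul_of_lt_of_lt hj hi
    have hdiv : (j * B + i) / B = j := by
      rw [Nat.add_comm, Nat.add_mul_div_right _ _ hB, Nat.div_eq_of_lt hi, Nat.zero_add]
    rw [hwhat _ hd _ (Nat.mod_lt _ (Nat.zero_lt_of_lt hk)), hdiv,
      Nat.add_mod_add_sub_mod_of_le (by omega) hk, Nat.mod_add_mod, Nat.add_assoc]
  calc ∑ c ∈ range n, W k c * x c
      = ∑ d ∈ range n, W k ((k + d) % n) * x ((k + d) % n) :=
        (sum_range_add_mod (fun c => W k c * x c) k n).symm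
    _ = ∑ j ∈ range G, ∑ i ∈ range B, W k ((k + (j * B + i)) % n) * x ((k + (j * B + i)) % n) := by
        rw [sum_range_sum_range_mul_add (fun d => W k ((k + d) % n) * x ((k + d) % n))]
        exact sum_congr (by rw [hn, Nat.mul_comm]) fun _ _ => rfl
    _ = _ := sum_congr rfl fun j hj => sum_congr rfl fun i hi =>
        (summand j (mem_range.1 hj) i (mem_range.1 hi)).symm

/-- **Correctness of the baby-step giant-step (BSGS) regrouping** (Appendix B,
Figure 6 of the paper). Let `n = B·G`. For `d = j·B + i` (`j < G`, `i < B`) let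
`ŵ_d = rot_{-jB}(diag_d(W))`, i.e. `ŵ_d[k] = W[(k-jB) mod n, ((k-jB) mod n + d) mod n]`.
Then `W·x = Σ_{j<G} rot_{jB}( Σ_{i<B} ŵ_{jB+i} ⊙ rot_i(x) )`, entrywise:
`(W·x)[k] = Σ_{j<G} Σ_{i<B} ŵ_{jB+i}[(k+jB) mod n] · x[((k+jB) mod n + i) mod n]`. -/
theorem bsgs_correctness
    {R : Type*} [CommRing R]
    (n B G : ℕ) (hB : 1 ≤ B) (hG : 1 ≤ G) (hn : n = B * G)
    (W : ℕ → ℕ → R) (x : ℕ → R)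
    (what : ℕ → ℕ → R)
    (hwhat : ∀ d < n, ∀ k < n,
      what d k = W ((k + n - (d / B) * B) % n) (((k + n - (d / B) * B) % n + d) % n)) :
    ∀ k < n,
      (∑ c ∈ Finset.range n, W k c * x c) =
        ∑ j ∈ Finset.range G, ∑ i ∈ Finset.range B,
          what (j * B + i) ((k + j * B) % n) * x (((k + j * B) % n + i) % n) :=
  bsgs_correctness_general n B G hn W x what hwhat
end
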